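/- Let D be a domain with quotient field K and let S be a torsion-free monoid with quotient group G. Then: (1) D is S-UMT if and only if D is G-UMT; (2) S is D-UMT if and only if S is K-UMT. -/

import Mathlib

/-! ### Basic notions for monoids, monoid algebras and domains -/

/-- A monoid `S` (written additively) is torsion-free if `n • x = n • y` implies `x = y`
for all integers `n ≥ 1`. -/
def AddTorsionFree (S : Type*) [AddCommMonoid S] : Prop :=
  ∀ n : ℕ, n ≠ 0 → ∀ x y : S, n • x = n • y → x = y

/-- An ideal of an additive monoid `S` is a nonempty subset `P` with `P + S ⊆ P`. -/
def IsMonoidIdeal {S : Type*} [AddCommMonoid S] (P : Set S) : Prop :=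
  P.Nonempty ∧ ∀ p ∈ P, ∀ s : S, p + s ∈ P

/-- An ideal `P` of an additive monoid `S` is prime if `P ≠ S` and
`s + t ∈ P` implies `s ∈ P` or `t ∈ P`. -/
def IsMonoidPrimeIdeal {S : Type*} [AddCommMonoid S] (P : Set S) : Prop :=
  IsMonoidIdeal P ∧ P ≠ Set.univ ∧ ∀ s t : S, s + t ∈ P → s ∈ P ∨ t ∈ P

/-- `P ∈ 𝔛(S)`: `P` is a minimal nonempty prime ideal of the monoid `S`. -/
def IsMinMonoidPrime {S : Type*} [AddCommMonoid S] (P : Set S) : Prop :=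
  IsMonoidPrimeIdeal P ∧ ∀ Q : Set S, IsMonoidPrimeIdeal Q → Q ⊆ P → Q = P

/-- `P ∈ 𝔛(R)`: `P` is a height-one prime ideal of `R`, i.e. a nonzero prime ideal
that is minimal among the nonzero prime ideals. -/
def IsHeightOnePrime {R : Type*} [CommRing R] (P : Ideal R) : Prop :=
  P.IsPrime ∧ P ≠ ⊥ ∧ ∀ Q : Ideal R, Q.IsPrime → Q < P → Q = ⊥

/-- `D[P]` for a subset `P ⊆ S`: the set of elements of the monoid algebra `D[S]`
all of whose exponents lie in `P`. -/
def expIn (D : Type*) {S : Type*} [CommRing D] [AddCommMonoid S] (P : Set S) :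
    Set (AddMonoidAlgebra D S) :=
  {f | ∀ s ∈ f.coeff.support, s ∈ P}

/-- `I[S]` for an ideal `I` of `D`: the set of elements of the monoid algebra `D[S]`
all of whose coefficients lie in `I`. -/
def coeffIn {D : Type*} (S : Type*) [CommRing D] [AddCommMonoid S] (I : Ideal D) :
    Set (AddMonoidAlgebra D S) :=
  {f | ∀ s : S, f.coeff s ∈ I}

/-- `φ : S →+ G` realizes `G` as the quotient (Grothendieck) group of `S`:
`φ` is injective and every element of `G` is a difference of elements of `φ(S)`. -/
def IsQuotientGroup {S G : Type*} [AddCommMonoid S] [AddCommGroup G] (φ : S →+ G) : Prop :=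
  Function.Injective φ ∧ ∀ g : G, ∃ s t : S, g = φ s - φ t

/-- A subgroup is cyclic if it is generated by a single element. -/
def IsCyclicAddSubgroup {G : Type*} [AddCommGroup G] (H : AddSubgroup G) : Prop :=
  ∃ g : G, H = AddSubgroup.closure {g}

/-- `G` satisfies the ACC on cyclic subgroups: every ascending chain of cyclic
subgroups of `G` stabilizes. -/
def ACCOnCyclicSubgroups (G : Type*) [AddCommGroup G] : Prop :=
  ∀ c : ℕ →o AddSubgroup G, (∀ n, IsCyclicAddSubgroup (c n)) →
    ∃ N, ∀ n, N ≤ n → c n = c N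

/-- `D` is `S`-UMT: `P[S] ∈ 𝔛(D[S])` for every `P ∈ 𝔛(D)`. -/
def IsDomainUMT (D S : Type*) [CommRing D] [AddCommMonoid S] : Prop :=
  ∀ P : Ideal D, IsHeightOnePrime P →
    ∃ Q : Ideal (AddMonoidAlgebra D S), (Q : Set (AddMonoidAlgebra D S)) = coeffIn S P ∧
      IsHeightOnePrime Q

/-- `S` is `D`-UMT: `D[P] ∈ 𝔛(D[S])` for every `P ∈ 𝔛(S)`. -/
def IsMonoidUMT (D S : Type*) [CommRing D] [AddCommMonoid S] : Prop :=
  ∀ P : Set S, IsMinMonoidPrime P →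
    ∃ Q : Ideal (AddMonoidAlgebra D S), (Q : Set (AddMonoidAlgebra D S)) = expIn D P ∧
      IsHeightOnePrime Q

/-- The localization `R_P` of `R` at a prime ideal `P`, as a subset of the fraction
field of `R`. -/
def locAt {R : Type*} [CommRing R] (P : Ideal R) : Set (FractionRing R) :=
  {x | ∃ a b : R, b ∉ P ∧
    x * algebraMap R (FractionRing R) b = algebraMap R (FractionRing R) a}

/-- A domain `R` is weakly Krull if `R = ⋂_{P ∈ 𝔛(R)} R_P` inside its quotient field and
every nonzero nonunit of `R` lies in only finitely many height-one primes. -/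
def IsWeaklyKrullDomain (R : Type*) [CommRing R] : Prop :=
  (∀ x : FractionRing R, (∀ P : Ideal R, IsHeightOnePrime P → x ∈ locAt P) →
      ∃ r : R, x = algebraMap R (FractionRing R) r) ∧
  ∀ r : R, r ≠ 0 → ¬IsUnit r → {P : Ideal R | IsHeightOnePrime P ∧ r ∈ P}.Finite

/-- The localization `S_P = {s - t : s ∈ S, t ∈ S ∖ P}` of the monoid `S` at `P`,
inside the quotient group of `S` realized by `φ`. -/
def monLocAt {S G : Type*} [AddCommMonoid S] [AddCommGroup G] (φ : S →+ G) (P : Set S) :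
    Set G :=
  {g | ∃ s t : S, t ∉ P ∧ g = φ s - φ t}

/-- A monoid `S` is weakly Krull if `S = ⋂_{P ∈ 𝔛(S)} S_P` inside its quotient group and
every nonunit of `S` lies in only finitely many minimal nonempty primes. -/
def IsWeaklyKrullMonoid {S G : Type*} [AddCommMonoid S] [AddCommGroup G] (φ : S →+ G) :
    Prop :=
  (∀ g : G, (∀ P : Set S, IsMinMonoidPrime P → g ∈ monLocAt φ P) → ∃ s : S, g = φ s) ∧
  ∀ s : S, ¬IsAddUnit s → {P : Set S | IsMinMonoidPrime P ∧ s ∈ P}.Finite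

/-- A Krull domain: a weakly Krull domain each of whose localizations at height-one
primes is a discrete rank-one valuation ring, i.e. the ring of nonnegative elements of a
`ℤ`-valued valuation on the quotient field. -/
def IsKrullDomain (R : Type*) [CommRing R] : Prop :=
  IsWeaklyKrullDomain R ∧
  ∀ P : Ideal R, IsHeightOnePrime P →
    ∃ v : (FractionRing R)ˣ →* Multiplicative ℤ,
      ∀ x : (FractionRing R)ˣ, ((x : FractionRing R) ∈ locAt P ↔ 0 ≤ Multiplicative.toAdd (v x))

/-- A Krull monoid: a weakly Krull monoid such that for each `P ∈ 𝔛(S)` there is a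
group homomorphism `v : q(S) → ℤ` with `S_P = {x : v x ≥ 0}`. -/
def IsKrullMonoid {S G : Type*} [AddCommMonoid S] [AddCommGroup G] (φ : S →+ G) : Prop :=
  IsWeaklyKrullMonoid φ ∧
  ∀ P : Set S, IsMinMonoidPrime P →
    ∃ v : G →+ ℤ, ∀ g : G, g ∈ monLocAt φ P ↔ 0 ≤ v g

/-- A generalized Krull domain: a weakly Krull domain each of whose localizations `R_P`
at height-one primes is a valuation domain: every `x` in the quotient field satisfies
`x ∈ R_P` or `x⁻¹ ∈ R_P`. -/
def IsGeneralizedKrullDomain (R : Type*) [CommRing R] : Prop :=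
  IsWeaklyKrullDomain R ∧
  ∀ P : Ideal R, IsHeightOnePrime P →
    ∀ x : FractionRing R, x ∈ locAt P ∨ ∃ y ∈ locAt P, x * y = 1

/-- A generalized Krull monoid: a weakly Krull monoid each of whose localizations `S_P`
at minimal primes is a valuation monoid of `q(S)`: `g ∈ S_P` or `-g ∈ S_P` for all `g`. -/
def IsGeneralizedKrullMonoid {S G : Type*} [AddCommMonoid S] [AddCommGroup G]
    (φ : S →+ G) : Prop :=
  IsWeaklyKrullMonoid φ ∧
  ∀ P : Set S, IsMinMonoidPrime P → ∀ g : G, g ∈ monLocAt φ P ∨ -g ∈ monLocAt φ P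

/-! ### The `t`-operation and UMT-domains -/

/-- For a subset `A` of the quotient field of `R`, the set
`A⁻¹ = {x : x • A ⊆ R}` inside the quotient field. -/
def setInv {R : Type*} [CommRing R] (A : Set (FractionRing R)) : Set (FractionRing R) :=
  {x | ∀ a ∈ A, ∃ r : R, x * a = algebraMap R (FractionRing R) r}

/-- `I_v = (I⁻¹)⁻¹` for an ideal `I` of `R`, as a subset of the quotient field. -/
def idealV {R : Type*} [CommRing R] (I : Ideal R) : Set (FractionRing R) :=
  setInv (setInv (algebraMap R (FractionRing R) '' (I : Set R)))

/-- `I` is a `t`-ideal: `I_t = I`, i.e. `J_v ⊆ I` for every nonzero finitely generated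
ideal `J ⊆ I` (the inclusion `I ⊆ I_t` always holds). -/
def IsTIdeal {R : Type*} [CommRing R] (I : Ideal R) : Prop :=
  ∀ J : Ideal R, J ≤ I → J.FG → J ≠ ⊥ →
    idealV J ⊆ algebraMap R (FractionRing R) '' (I : Set R)

/-- A maximal `t`-ideal: an ideal maximal among proper `t`-ideals. -/
def IsMaximalTIdeal {R : Type*} [CommRing R] (I : Ideal R) : Prop :=
  I ≠ ⊤ ∧ IsTIdeal I ∧ ∀ J : Ideal R, J ≠ ⊤ → IsTIdeal J → I ≤ J → I = J

/-- A UMT-domain: every (nonzero) prime ideal of `D[X]` contracting to `(0)` in `D`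
(an "upper to zero") is a maximal `t`-ideal of `D[X]`. -/
def IsUMTDomain (D : Type*) [CommRing D] : Prop :=
  ∀ Q : Ideal (Polynomial D), Q.IsPrime → Q ≠ ⊥ →
    Q.comap (Polynomial.C : D →+* Polynomial D) = ⊥ → IsMaximalTIdeal Q

/-! ### GCD, primary elements, weak factoriality -/

/-- A GCD-domain: any two nonzero elements have a greatest common divisor. -/
def IsGCDDomain (R : Type*) [CommRing R] : Prop :=
  ∀ a b : R, a ≠ 0 → b ≠ 0 →
    ∃ d : R, d ∣ a ∧ d ∣ b ∧ ∀ e : R, e ∣ a → e ∣ b → e ∣ d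

/-- Divisibility in an additive monoid: `a ∣ b ↔ b ∈ a + S`. -/
def AddDvd {S : Type*} [AddCommMonoid S] (a b : S) : Prop := ∃ c : S, b = a + c

/-- A GCD-monoid: any two elements have a greatest common divisor with respect to
the divisibility preorder. -/
def IsGCDAddMonoid (S : Type*) [AddCommMonoid S] : Prop :=
  ∀ a b : S, ∃ d : S, AddDvd d a ∧ AddDvd d b ∧ ∀ e : S, AddDvd e a → AddDvd e b → AddDvd e d

/-- A primary element of a ring: the principal ideal it generates is primary. -/
def IsPrimaryElem {R : Type*} [CommRing R] (a : R) : Prop :=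
  (Ideal.span {a} : Ideal R).IsPrimary

/-- A weakly factorial domain: every nonzero nonunit is a finite product of
primary elements. -/
def IsWeaklyFactorialDomain (R : Type*) [CommRing R] : Prop :=
  ∀ a : R, a ≠ 0 → ¬IsUnit a →
    ∃ l : List R, (∀ b ∈ l, IsPrimaryElem b) ∧ a = l.prod

/-- A primary ideal of an additive monoid: an ideal `Q ≠ S` such that `s + t ∈ Q`
with `s ∉ Q` implies `n • t ∈ Q` for some `n ≥ 1`. -/
def IsMonoidPrimaryIdeal {S : Type*} [AddCommMonoid S] (Q : Set S) : Prop :=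
  IsMonoidIdeal Q ∧ Q ≠ Set.univ ∧
    ∀ s t : S, s + t ∈ Q → s ∉ Q → ∃ n : ℕ, 1 ≤ n ∧ n • t ∈ Q

/-- A primary element of an additive monoid: the ideal `a + S` is primary. -/
def IsMonoidPrimaryElem {S : Type*} [AddCommMonoid S] (a : S) : Prop :=
  IsMonoidPrimaryIdeal {x : S | ∃ s : S, x = a + s}

/-- A weakly factorial monoid: every nonunit is a finite sum of primary elements. -/
def IsWeaklyFactorialMonoid (S : Type*) [AddCommMonoid S] : Prop :=
  ∀ a : S, ¬IsAddUnit a →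
    ∃ l : List S, (∀ b ∈ l, IsMonoidPrimaryElem b) ∧ a = l.sum

/-! ### The canonical inclusions `D[S] → K[S]` and `D[S] → D[G]` -/

/-- The canonical inclusion `D[S] → K[S]`, where `K` is the fraction field of `D`,
applying `D → K` to all coefficients. -/
noncomputable def coeffEmbed (D S : Type*) [CommRing D] [IsDomain D] [AddCommMonoid S] :
    AddMonoidAlgebra D S →+* AddMonoidAlgebra (FractionRing D) S :=
  AddMonoidAlgebra.liftNCRingHom
    ((AddMonoidAlgebra.singleZeroRingHom).comp (algebraMap D (FractionRing D)))
    (AddMonoidAlgebra.of (FractionRing D) S) (fun {_ _} => Commute.all _ _)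

/-- The canonical inclusion `D[S] → D[G]`, where `G` is the quotient group of `S`
realized by `φ`, applying `φ` to all exponents. -/
noncomputable def expEmbed (D : Type*) {S G : Type*} [CommRing D] [AddCommMonoid S]
    [AddCommGroup G] (φ : S →+ G) : AddMonoidAlgebra D S →+* AddMonoidAlgebra D G :=
  AddMonoidAlgebra.mapDomainRingHom D φ

/-! `D[G]` is the localization of `D[S]` at the monomials `X^s`, `s ∈ S` (every `g ∈ G` is a
difference `φ s - φ t`), and `K[S]` is the localization of `D[S]` at the nonzero-divisors of `D`.
For a localization `R → R_M` at non-zero-divisors, contraction is an order isomorphism from the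
primes of `R_M` onto the primes of `R` missing `M` that matches `⊥` with `⊥`, so an ideal of
`R_M` is a height-one prime exactly when its contraction is. It remains to note that
`P[G] ∩ D[S] = P[S]` and `K[P] ∩ D[S] = D[P]`. -/

namespace IsLocalization

variable {R S : Type*} [CommRing R] [CommRing S] [Algebra R S] (M : Submonoid R)
  [IsLocalization M S]

theorem under_eq_bot_iff (hM : M ≤ nonZeroDivisors R) {Q : Ideal S} :
    Q.under R = ⊥ ↔ Q = ⊥ := by
  rw [← Ideal.comap_bot_of_injective (algebraMap R S) (IsLocalization.injective S hM)]
  exact (orderEmbedding M S).injective.eq_iff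

theorem isHeightOnePrime_under_iff (hM : M ≤ nonZeroDivisors R) {Q : Ideal S} :
    IsHeightOnePrime (Q.under R) ↔ IsHeightOnePrime Q := by
  refine ⟨fun ⟨hprime, hne, hmin⟩ => ⟨?_, ?_, fun Q₀ hQ₀ hlt => ?_⟩,
    fun ⟨hprime, hne, hmin⟩ => ⟨?_, ?_, fun Q₀ hQ₀ hlt => ?_⟩⟩
  · exact (isPrime_iff_isPrime_disjoint M S Q).2
      ⟨hprime, (disjoint_under_iff M S Q).2 fun h => hprime.ne_top (by simp [h])⟩
  · exact fun h => hne ((under_eq_bot_iff M hM).2 h)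
  · exact (under_eq_bot_iff M hM).1 <| hmin _ (((isPrime_iff_isPrime_disjoint M S Q₀).1 hQ₀).1)
      ((orderEmbedding M S).lt_iff_lt.2 hlt)
  · exact ((isPrime_iff_isPrime_disjoint M S Q).1 hprime).1
  · exact fun h => hne ((under_eq_bot_iff M hM).1 h)
  · have hdisj : Disjoint (M : Set R) Q₀ :=
      ((isPrime_iff_isPrime_disjoint M S Q).1 hprime).2.mono_right hlt.le
    have hunder : (Q₀.map (algebraMap R S)).under R = Q₀ :=
      under_map_of_isPrime_disjoint M S hQ₀ hdisj
    rw [← hunder] at hlt ⊢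
    exact (under_eq_bot_iff M hM).2 <| hmin _ (isPrime_of_isPrime_disjoint M S Q₀ hQ₀ hdisj)
      ((orderEmbedding M S).lt_iff_lt.1 hlt)

end IsLocalization

namespace RingHom

variable {R S : Type*} [CommRing R] [CommRing S] (f : R →+* S)

def IsFraction (x : S) : Prop :=
  ∃ m : R, IsUnit (f m) ∧ x * f m ∈ f.range

theorem IsFraction.add {f : R →+* S} {x y : S} (hx : f.IsFraction x) (hy : f.IsFraction y) :
    f.IsFraction (x + y) := by
  obtain ⟨m, hm, r, hr⟩ := hx
  obtain ⟨n, hn, s, hs⟩ := hy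
  refine ⟨m * n, by simpa using hm.mul hn, r * n + s * m, ?_⟩
  rw [map_add, map_mul, map_mul, hr, hs, map_mul]
  ring

theorem isLocalization_comap_isUnit (hf : Function.Injective f)
    (hfrac : ∀ x, f.IsFraction x) :
    letI := f.toAlgebra
    IsLocalization ((IsUnit.submonoid S).comap f) S := by
  let _ := f.toAlgebra
  refine ⟨fun m => m.2, fun x => ?_, fun {x y} h => ⟨1, by rw [hf h]⟩⟩
  obtain ⟨m, hm, r, hr⟩ := hfrac x
  exact ⟨⟨r, m, hm⟩, hr.symm⟩

theorem isHeightOnePrime_comap_iff (hf : Function.Injective f)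
    (hfrac : ∀ x, f.IsFraction x) (Q : Ideal S) :
    IsHeightOnePrime (Q.comap f) ↔ IsHeightOnePrime Q := by
  let _ := f.toAlgebra
  have := f.isLocalization_comap_isUnit hf hfrac
  exact IsLocalization.isHeightOnePrime_under_iff ((IsUnit.submonoid S).comap f)
    fun m hm => mem_nonZeroDivisors_of_injective hf (IsUnit.mem_nonZeroDivisors hm)

end RingHom

theorem Ideal.exists_coe_eq_and_iff {R : Type*} [Semiring R] {p : Ideal R → Prop} (I : Ideal R) :
    (∃ Q : Ideal R, (Q : Set R) = I ∧ p Q) ↔ p I :=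
  ⟨fun ⟨_, hQ, h⟩ => SetLike.coe_injective hQ ▸ h, fun h => ⟨I, rfl, h⟩⟩

namespace AddMonoidAlgebra

variable {D S G : Type*} [CommRing D] [AddCommMonoid S] [AddCommGroup G]

variable (S) in
noncomputable def coeffIdeal (I : Ideal D) : Ideal D[S] :=
  RingHom.ker (mapRingHom S (Ideal.Quotient.mk I))

theorem coe_coeffIdeal (I : Ideal D) : (coeffIdeal S I : Set D[S]) = coeffIn S I := by
  ext x
  simp [coeffIdeal, coeffIn, AddMonoidAlgebra.ext_iff, Finsupp.ext_iff,
    Ideal.Quotient.eq_zero_iff_mem]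

theorem comap_coeffIdeal_mapDomainRingHom {φ : S →+ G} (hφ : Function.Injective φ)
    (I : Ideal D) : (coeffIdeal G I).comap (mapDomainRingHom D φ) = coeffIdeal S I := by
  rw [coeffIdeal, RingHom.comap_ker, mapRingHom_comp_mapDomainRingHom,
    RingHom.ker_comp_of_injective _ (mapDomain_injective hφ), coeffIdeal]

variable (D) in
def expIdeal (P : Set S) (hP : ∀ p ∈ P, ∀ s, p + s ∈ P) : Ideal D[S] where
  carrier := expIn D P
  add_mem' {x y} hx hy s hs := by
    classical
    rcases Finset.mem_union.1 (Finsupp.support_add hs) with h | h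
    exacts [hx s h, hy s h]
  zero_mem' s hs := by simp at hs
  smul_mem' c x hx s hs := by
    classical
    obtain ⟨a, -, b, hb, rfl⟩ := Finset.mem_add.1 (support_coeff_mul_subset c x hs)
    rw [add_comm]
    exact hP b (hx b hb) a

theorem comap_expIdeal_mapRingHom {D' : Type*} [CommRing D'] {f : D →+* D'}
    (hf : Function.Injective f) {P : Set S} (hP : ∀ p ∈ P, ∀ s, p + s ∈ P) :
    (expIdeal D' P hP).comap (mapRingHom S f) = expIdeal D P hP := by
  ext x
  change (∀ s ∈ (mapRingHom S f x).coeff.support, s ∈ P) ↔ ∀ s ∈ x.coeff.support, s ∈ P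
  simp only [Finsupp.mem_support_iff, coeff_mapRingHom, ne_eq, map_eq_zero_iff f hf]

theorem isUnit_single_of_isUnit {a : S} {r : D} (ha : IsAddUnit a) (hr : IsUnit r) :
    IsUnit (single a r) := by
  obtain ⟨u, rfl⟩ := ha
  obtain ⟨v, rfl⟩ := hr
  refine IsUnit.of_mul_eq_one (single ↑(-u) ↑v⁻¹) ?_
  rw [single_mul_single, AddUnits.add_neg, Units.mul_inv, one_def]

theorem isFraction_mapDomainRingHom {φ : S →+ G} (hφ : ∀ g, ∃ s t, g = φ s - φ t) (x : D[G]) :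
    (mapDomainRingHom D φ).IsFraction x := by
  induction x using induction_linear with
  | zero => exact ⟨1, by simp, 0, by simp⟩
  | add x y hx hy => exact hx.add hy
  | single g d =>
    obtain ⟨s, t, rfl⟩ := hφ g
    refine ⟨single t 1, ?_, single s d, ?_⟩
    · rw [mapDomainRingHom_apply, mapDomain_single]
      exact isUnit_single_of_isUnit (AddGroup.isAddUnit _) isUnit_one
    · simp [single_mul_single]

theorem isFraction_mapRingHom_algebraMap {K : Type*} [CommRing K] [Algebra D K]
    (M : Submonoid D) [IsLocalization M K] (x : K[S]) :
    (mapRingHom S (algebraMap D K)).IsFraction x := by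
  induction x using induction_linear with
  | zero => exact ⟨1, by simp, 0, by simp⟩
  | add x y hx hy => exact hx.add hy
  | single a k =>
    obtain ⟨⟨n, d⟩, hnd⟩ := IsLocalization.surj M k
    refine ⟨single 0 d, ?_, single a n, ?_⟩
    · rw [mapRingHom_single]
      exact isUnit_single_of_isUnit isAddUnit_zero (IsLocalization.map_units K d)
    · simp [single_mul_single, hnd]

end AddMonoidAlgebra

section UMT

open AddMonoidAlgebra

variable {D S : Type*} [CommRing D] [AddCommMonoid S]

theorem isDomainUMT_iff_forall_isHeightOnePrime_coeffIdeal :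
    IsDomainUMT D S ↔ ∀ P : Ideal D, IsHeightOnePrime P → IsHeightOnePrime (coeffIdeal S P) := by
  simp only [IsDomainUMT, ← coe_coeffIdeal, Ideal.exists_coe_eq_and_iff]

theorem isMonoidUMT_iff_forall_isHeightOnePrime_expIdeal :
    IsMonoidUMT D S ↔ ∀ (P : Set S) (hP : IsMinMonoidPrime P),
      IsHeightOnePrime (expIdeal D P hP.1.1.2) :=
  forall₂_congr fun P hP => Ideal.exists_coe_eq_and_iff (expIdeal D P hP.1.1.2)

theorem isDomainUMT_iff_of_isQuotientGroup {G : Type*} [AddCommGroup G] {φ : S →+ G}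
    (hφ : IsQuotientGroup φ) : IsDomainUMT D S ↔ IsDomainUMT D G := by
  simp only [isDomainUMT_iff_forall_isHeightOnePrime_coeffIdeal,
    ← comap_coeffIdeal_mapDomainRingHom hφ.1,
    (mapDomainRingHom D φ).isHeightOnePrime_comap_iff (mapDomain_injective hφ.1)
      (isFraction_mapDomainRingHom hφ.2)]

theorem isMonoidUMT_iff_of_isLocalization {K : Type*} [CommRing K] [Algebra D K]
    (M : Submonoid D) [IsLocalization M K] (hM : M ≤ nonZeroDivisors D) :
    IsMonoidUMT D S ↔ IsMonoidUMT K S := by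
  have hinj := IsLocalization.injective K hM
  simp only [isMonoidUMT_iff_forall_isHeightOnePrime_expIdeal,
    ← comap_expIdeal_mapRingHom hinj,
    (mapRingHom S (algebraMap D K)).isHeightOnePrime_comap_iff (map_injective _ hinj)
      (isFraction_mapRingHom_algebraMap M)]

end UMT

theorem isDomainUMT_iff_and_isMonoidUMT_iff_general
    {D S G : Type*} [CommRing D] [AddCancelCommMonoid S] [AddCommGroup G]
    (φ : S →+ G) (hφ : IsQuotientGroup φ) :
    (IsDomainUMT D S ↔ IsDomainUMT D G) ∧
    (IsMonoidUMT D S ↔ IsMonoidUMT (FractionRing D) S) :=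
  ⟨isDomainUMT_iff_of_isQuotientGroup hφ,
    isMonoidUMT_iff_of_isLocalization (nonZeroDivisors D) le_rfl⟩

/-- For a domain `D` with quotient field `K` and a torsion-free monoid `S`
with quotient group `G`: (1) `D` is `S`-UMT iff `D` is `G`-UMT; (2) `S` is `D`-UMT iff
`S` is `K`-UMT. -/
theorem isDomainUMT_iff_and_isMonoidUMT_iff
    {D S G : Type*} [CommRing D] [IsDomain D] [AddCancelCommMonoid S] [AddCommGroup G]
    (hS : AddTorsionFree S) (φ : S →+ G) (hφ : IsQuotientGroup φ) :
    (IsDomainUMT D S ↔ IsDomainUMT D G) ∧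
    (IsMonoidUMT D S ↔ IsMonoidUMT (FractionRing D) S) :=
  isDomainUMT_iff_and_isMonoidUMT_iff_general φ hφ
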